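/- Let n ≥ 3, θ = 2π/n, m ∈ ℝ, and let l be an integer with 1 ≤ l ≤ ⌊n/2⌋. For 1 ≤ k ≤ n−1 let V_k = d_k^{−3}(E₂ − 3 u_k u_kᵀ), where q_k = (cos kθ, sin kθ)ᵀ, q_n = (1,0)ᵀ, d_k = |q_n − q_k| = 2 sin(kπ/n), u_k = (q_n − q_k)/d_k, and E₂ is the 2×2 identity. Let V_c = m(E₂ − 3 q_n q_nᵀ) and V_n = −Σ_{k=1}^{n−1} V_k − V_c. Then Σ_{k=1}^{n} V_k e^{−i l k θ} (cos kθ, sin kθ)ᵀ = (U_{l1} + 2m, U_{l2})ᵀ and Σ_{k=1}^{n} V_k e^{−i l k θ} (−sin kθ, cos kθ)ᵀ = (U'_{l1}, U'_{l2} − m)ᵀ. -/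

import Mathlib

open Real Finset

noncomputable section

/-- θ = 2π/n -/
def theta (n : ℕ) : ℝ := 2 * Real.pi / n

/-- d_k = 2 sin(kπ/n) -/
def dk (n k : ℕ) : ℝ := 2 * Real.sin (k * Real.pi / n)

/-- d₀ = Σ_{k=1}^{n-1} 1/d_k -/
def dzero (n : ℕ) : ℝ := ∑ k ∈ Finset.Icc 1 (n - 1), 1 / dk n k

/-- I₀ = √n -/
def Izero (n : ℕ) : ℝ := Real.sqrt n

/-- U_{e0} = n d₀ / 2 -/
def Ue (n : ℕ) : ℝ := n * dzero n / 2

/-- U_{l1} -/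
def Ul1 (n l : ℕ) : ℂ :=
  ∑ k ∈ Finset.Icc 1 (n - 1),
    (((1 - Real.cos (k * theta n) * Real.cos (l * k * theta n)
        - 3 * (Real.cos (k * theta n) - Real.cos (l * k * theta n)))
      / (2 * dk n k ^ 3) : ℝ) : ℂ)

/-- U_{l2} -/
def Ul2 (n l : ℕ) : ℂ :=
  ∑ k ∈ Finset.Icc 1 (n - 1),
    Complex.I * ((Real.sin (k * theta n) * Real.sin (l * k * theta n)
      / (2 * dk n k ^ 3) : ℝ) : ℂ)

/-- U'_{l1} -/
def Ul1' (n l : ℕ) : ℂ :=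
  ∑ k ∈ Finset.Icc 1 (n - 1),
    (-Complex.I) * ((Real.sin (k * theta n) * Real.sin (l * k * theta n)
      / (2 * dk n k ^ 3) : ℝ) : ℂ)

/-- U'_{l2} -/
def Ul2' (n l : ℕ) : ℂ :=
  ∑ k ∈ Finset.Icc 1 (n - 1),
    (((1 - Real.cos (k * theta n) * Real.cos (l * k * theta n)
        + 3 * (Real.cos (k * theta n) - Real.cos (l * k * theta n)))
      / (2 * dk n k ^ 3) : ℝ) : ℂ)

/-- U₀ = U_{e0} + n m -/
def Uzero (n : ℕ) (m : ℝ) : ℝ := Ue n + n * m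

/-- The 2×2 block A_l(m), for 2 ≤ l ≤ ⌊n/2⌋. -/
def Ablock (n l : ℕ) (m : ℝ) : Matrix (Fin 2) (Fin 2) ℂ :=
  !![((Uzero n m / Izero n : ℝ) : ℂ) + (Izero n : ℂ) * (Ul1 n l + 2 * (m : ℂ)),
      -Complex.I * (Izero n : ℂ) * Ul1' n l;
     Complex.I * (Izero n : ℂ) * Ul2 n l,
      ((Uzero n m / Izero n : ℝ) : ℂ) + (Izero n : ℂ) * (Ul2' n l - (m : ℂ))]

/-- a_l = (U_{e0}/I₀ + I₀ U_{l1})(U_{e0}/I₀ + I₀ U'_{l2}) − I₀² U'_{l1} U_{l2}. -/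
def aA (n l : ℕ) : ℂ :=
  (((Ue n / Izero n : ℝ) : ℂ) + (Izero n : ℂ) * Ul1 n l)
    * (((Ue n / Izero n : ℝ) : ℂ) + (Izero n : ℂ) * Ul2' n l)
  - (Izero n : ℂ) ^ 2 * Ul1' n l * Ul2 n l

/-- q_k = (cos kθ, sin kθ)ᵀ (so q_n = (1,0)ᵀ). -/
def qvec (n k : ℕ) : Fin 2 → ℝ := ![Real.cos (k * theta n), Real.sin (k * theta n)]

/-- u_k = (q_n − q_k)/d_k. -/
def uvec (n k : ℕ) : Fin 2 → ℝ := (dk n k)⁻¹ • (qvec n n - qvec n k)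

/-- The vertex blocks of the Hessian of the potential:
V_k = d_k⁻³(E₂ − 3 u_k u_kᵀ) for 1 ≤ k ≤ n−1, and
V_n = −Σ_{k=1}^{n−1} V_k − m(E₂ − 3 q_n q_nᵀ). -/
def Vmat (n : ℕ) (m : ℝ) (k : ℕ) : Matrix (Fin 2) (Fin 2) ℝ :=
  if k = n then
    -(∑ j ∈ Finset.Icc 1 (n - 1),
        (dk n j ^ 3)⁻¹ • ((1 : Matrix (Fin 2) (Fin 2) ℝ)
          - 3 • Matrix.vecMulVec (uvec n j) (uvec n j)))
      - m • ((1 : Matrix (Fin 2) (Fin 2) ℝ) - 3 • Matrix.vecMulVec (qvec n n) (qvec n n))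
  else
    (dk n k ^ 3)⁻¹ • ((1 : Matrix (Fin 2) (Fin 2) ℝ)
      - 3 • Matrix.vecMulVec (uvec n k) (uvec n k))

/-! ### Auxiliary lemmas -/

lemma dk_pos {n k : ℕ} (hn : 3 ≤ n) (hk1 : 1 ≤ k) (hk2 : k ≤ n - 1) : 0 < dk n k := by
  have hn0 : (0:ℝ) < n := by positivity
  have h1 : 0 < (k:ℝ) * Real.pi / n := by
    have : (0:ℝ) < k := by exact_mod_cast hk1
    positivity
  have h2 : (k:ℝ) * Real.pi / n < Real.pi := by
    rw [div_lt_iff₀ hn0]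
    have : (k:ℝ) < n := by exact_mod_cast (by omega : k < n)
    nlinarith [Real.pi_pos]
  have := Real.sin_pos_of_pos_of_lt_pi h1 h2
  unfold dk; linarith

lemma dk_sq {n k : ℕ} : dk n k ^ 2 = 2 - 2 * Real.cos (k * theta n) := by
  have h : (k:ℝ) * theta n = 2 * ((k:ℝ) * Real.pi / n) := by unfold theta; ring
  rw [h, Real.cos_two_mul]
  have := Real.sin_sq_add_cos_sq ((k:ℝ) * Real.pi / n)
  unfold dk; nlinarith

lemma nat_theta {n : ℕ} (hn : 3 ≤ n) : (n:ℝ) * theta n = 2 * Real.pi := by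
  unfold theta; have hn0 : (n:ℝ) ≠ 0 := by positivity
  field_simp

lemma angle_sym {n k : ℕ} (hn : 3 ≤ n) (hk : k ≤ n) :
    ((n - k : ℕ) : ℝ) * theta n = 2 * Real.pi - k * theta n := by
  have : ((n - k : ℕ) : ℝ) = n - k := by push_cast [hk]; ring
  rw [this]; unfold theta
  have hn0 : (n:ℝ) ≠ 0 := by positivity
  field_simp

lemma cos_sym {n k : ℕ} (hn : 3 ≤ n) (hk : k ≤ n) :
    Real.cos (((n - k : ℕ) : ℝ) * theta n) = Real.cos (k * theta n) := by
  rw [angle_sym hn hk]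
  have := Real.cos_nat_mul_two_pi_sub ((k:ℝ) * theta n) 1
  simpa using this

lemma sin_sym {n k : ℕ} (hn : 3 ≤ n) (hk : k ≤ n) :
    Real.sin (((n - k : ℕ) : ℝ) * theta n) = -Real.sin (k * theta n) := by
  rw [angle_sym hn hk]
  have := Real.sin_nat_mul_two_pi_sub ((k:ℝ) * theta n) 1
  simpa using this

lemma cosl_sym {n k l : ℕ} (hn : 3 ≤ n) (hk : k ≤ n) :
    Real.cos ((l:ℝ) * ((n - k : ℕ) : ℝ) * theta n) = Real.cos ((l:ℝ) * k * theta n) := by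
  have h : (l:ℝ) * ((n - k : ℕ) : ℝ) * theta n
      = (l:ℝ) * (2 * Real.pi) - (l:ℝ) * k * theta n := by
    rw [mul_assoc, angle_sym hn hk]; ring
  rw [h, Real.cos_nat_mul_two_pi_sub]

lemma sinl_sym {n k l : ℕ} (hn : 3 ≤ n) (hk : k ≤ n) :
    Real.sin ((l:ℝ) * ((n - k : ℕ) : ℝ) * theta n) = -Real.sin ((l:ℝ) * k * theta n) := by
  have h : (l:ℝ) * ((n - k : ℕ) : ℝ) * theta n
      = (l:ℝ) * (2 * Real.pi) - (l:ℝ) * k * theta n := by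
    rw [mul_assoc, angle_sym hn hk]; ring
  rw [h, Real.sin_nat_mul_two_pi_sub]

lemma dk_sym {n k : ℕ} (hn : 3 ≤ n) (hk : k ≤ n) : dk n (n - k) = dk n k := by
  unfold dk
  have h : ((n - k : ℕ) : ℝ) * Real.pi / n = Real.pi - k * Real.pi / n := by
    have : ((n - k : ℕ) : ℝ) = n - k := by push_cast [hk]; ring
    rw [this]
    have hn0 : (n:ℝ) ≠ 0 := by positivity
    field_simp
  rw [h, Real.sin_pi_sub]

lemma sum_antisym {n : ℕ} (f : ℕ → ℝ) (hf : ∀ k ∈ Finset.Icc 1 (n-1), f (n - k) = - f k) :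
    ∑ k ∈ Finset.Icc 1 (n-1), f k = 0 := by
  have h : ∑ k ∈ Finset.Icc 1 (n-1), f k = ∑ k ∈ Finset.Icc 1 (n-1), f (n - k) := by
    apply Finset.sum_nbij' (i := fun k => n - k) (j := fun k => n - k)
    · intro a ha; simp only [Finset.mem_Icc] at *; omega
    · intro a ha; simp only [Finset.mem_Icc] at *; omega
    · intro a ha; simp only [Finset.mem_Icc] at *; omega
    · intro a ha; simp only [Finset.mem_Icc] at *; omega
    · intro a ha
      simp only [Finset.mem_Icc] at ha
      congr 1; omega
  rw [Finset.sum_congr rfl hf] at h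
  simp only [Finset.sum_neg_distrib] at h
  linarith

lemma qn_zero {n : ℕ} (hn : 3 ≤ n) : qvec n n 0 = 1 := by
  simp [qvec, nat_theta hn]

lemma qn_one {n : ℕ} (hn : 3 ≤ n) : qvec n n 1 = 0 := by
  simp [qvec, nat_theta hn]

lemma uvec_zero {n k : ℕ} (hn : 3 ≤ n) :
    uvec n k 0 = (dk n k)⁻¹ * (1 - Real.cos (k * theta n)) := by
  simp [uvec, qvec, nat_theta hn]

lemma uvec_one {n k : ℕ} (hn : 3 ≤ n) :
    uvec n k 1 = (dk n k)⁻¹ * (- Real.sin (k * theta n)) := by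
  simp [uvec, qvec, nat_theta hn]

lemma V00 {n k : ℕ} (m : ℝ) (hn : 3 ≤ n) (hkn : k ≠ n) (hd : dk n k ≠ 0) :
    Vmat n m k 0 0 = (3 * Real.cos (k * theta n) - 1) / (2 * dk n k ^ 3) := by
  rw [Vmat, if_neg hkn]
  simp only [Matrix.smul_apply, Matrix.sub_apply, Matrix.one_apply_eq,
    Matrix.vecMulVec_apply, uvec_zero hn, smul_eq_mul]
  simp only [nsmul_eq_mul, Nat.cast_ofNat]
  have hsq := dk_sq (n := n) (k := k)
  field_simp
  linear_combination (3 - 3 * Real.cos (k * theta n)) * hsq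

lemma V01 {n k : ℕ} (m : ℝ) (hn : 3 ≤ n) (hkn : k ≠ n) (hd : dk n k ≠ 0) :
    Vmat n m k 0 1 = 3 * Real.sin (k * theta n) / (2 * dk n k ^ 3) := by
  rw [Vmat, if_neg hkn]
  simp only [Matrix.smul_apply, Matrix.sub_apply, Matrix.one_apply, Matrix.vecMulVec_apply,
    uvec_zero hn, uvec_one hn, smul_eq_mul]
  simp only [nsmul_eq_mul, Nat.cast_ofNat]
  have hsq := dk_sq (n := n) (k := k)
  norm_num
  field_simp
  linear_combination (-Real.sin (k * theta n)) * hsq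

lemma V10 {n k : ℕ} (m : ℝ) (hn : 3 ≤ n) (hkn : k ≠ n) (hd : dk n k ≠ 0) :
    Vmat n m k 1 0 = 3 * Real.sin (k * theta n) / (2 * dk n k ^ 3) := by
  rw [Vmat, if_neg hkn]
  simp only [Matrix.smul_apply, Matrix.sub_apply, Matrix.one_apply, Matrix.vecMulVec_apply,
    uvec_zero hn, uvec_one hn, smul_eq_mul]
  simp only [nsmul_eq_mul, Nat.cast_ofNat]
  have hsq := dk_sq (n := n) (k := k)
  norm_num
  field_simp
  linear_combination (-Real.sin (k * theta n)) * hsq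

lemma V11 {n k : ℕ} (m : ℝ) (hn : 3 ≤ n) (hkn : k ≠ n) (hd : dk n k ≠ 0) :
    Vmat n m k 1 1 = -(1 + 3 * Real.cos (k * theta n)) / (2 * dk n k ^ 3) := by
  rw [Vmat, if_neg hkn]
  simp only [Matrix.smul_apply, Matrix.sub_apply, Matrix.one_apply_eq, Matrix.vecMulVec_apply,
    uvec_one hn, smul_eq_mul]
  simp only [nsmul_eq_mul, Nat.cast_ofNat]
  have hsq := dk_sq (n := n) (k := k)
  have hsin := Real.sin_sq_add_cos_sq ((k:ℝ) * theta n)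
  field_simp
  linear_combination (3 + 3 * Real.cos (k * theta n)) * hsq +
    (-6) * hsin

lemma Vn_entry {n : ℕ} (hn : 3 ≤ n) (m : ℝ) (i j : Fin 2) :
    Vmat n m n i j = -(∑ p ∈ Finset.Icc 1 (n-1), Vmat n m p i j)
      - m * ((if i = j then (1:ℝ) else 0) - 3 * (qvec n n i * qvec n n j)) := by
  rw [Vmat, if_pos rfl]
  have h : ∀ p ∈ Finset.Icc 1 (n-1),
      (dk n p ^ 3)⁻¹ • ((1 : Matrix (Fin 2) (Fin 2) ℝ)
        - 3 • Matrix.vecMulVec (uvec n p) (uvec n p)) = Vmat n m p := by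
    intro p hp
    simp only [Finset.mem_Icc] at hp
    rw [Vmat, if_neg (by omega)]
  rw [Finset.sum_congr rfl h]
  simp only [Matrix.sub_apply, Matrix.neg_apply, Matrix.sum_apply, Matrix.smul_apply,
    Matrix.one_apply, Matrix.vecMulVec_apply, smul_eq_mul]
  ring

lemma expf (x : ℝ) : Complex.exp ((-x : ℝ) * Complex.I)
    = (Real.cos x : ℂ) - (Real.sin x : ℂ) * Complex.I := by
  rw [Complex.exp_mul_I, ← Complex.ofReal_cos, ← Complex.ofReal_sin,
    Real.cos_neg, Real.sin_neg]
  push_cast; ring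

/-- Σ_{k=1}^{n} V_k e^{−ilkθ}(cos kθ, sin kθ)ᵀ = (U_{l1} + 2m, U_{l2})ᵀ and
Σ_{k=1}^{n} V_k e^{−ilkθ}(−sin kθ, cos kθ)ᵀ = (U'_{l1}, U'_{l2} − m)ᵀ. -/
theorem potential_hessian_fourier (n : ℕ) (hn : 3 ≤ n) (m : ℝ) (l : ℕ)
    (hl1 : 1 ≤ l) (hl : l ≤ n / 2) :
    (∑ k ∈ Finset.Icc 1 n, Complex.exp (-Complex.I * l * k * theta n) •
        ((Vmat n m k).map (fun a => (a : ℂ))).mulVec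
          ![((Real.cos (k * theta n) : ℝ) : ℂ), ((Real.sin (k * theta n) : ℝ) : ℂ)])
      = ![Ul1 n l + 2 * (m : ℂ), Ul2 n l]
    ∧ (∑ k ∈ Finset.Icc 1 n, Complex.exp (-Complex.I * l * k * theta n) •
        ((Vmat n m k).map (fun a => (a : ℂ))).mulVec
          ![((-Real.sin (k * theta n) : ℝ) : ℂ), ((Real.cos (k * theta n) : ℝ) : ℂ)])
      = ![Ul1' n l, Ul2' n l - (m : ℂ)] := by
  obtain ⟨N, rfl⟩ : ∃ N, n = N + 1 := ⟨n - 1, by omega⟩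
  set n' := N + 1 with hn'
  -- basic facts
  have hdk : ∀ k, 1 ≤ k → k ≤ N → dk n' k ≠ 0 := by
    intro k h1 h2
    exact ne_of_gt (dk_pos hn h1 (by omega))
  have hexp : ∀ k : ℕ, Complex.exp (-Complex.I * l * k * (theta n' : ℂ))
      = ((Real.cos ((l:ℝ) * k * theta n') : ℝ) : ℂ)
        - ((Real.sin ((l:ℝ) * k * theta n') : ℝ) : ℂ) * Complex.I := by
    intro k
    have h : -Complex.I * l * k * (theta n' : ℂ)
        = ((-( (l:ℝ) * k * theta n') : ℝ) : ℂ) * Complex.I := by push_cast; ring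
    rw [h, expf]
  have hcos_tail : Real.cos ((n' : ℝ) * theta n') = 1 := by
    rw [nat_theta hn, Real.cos_two_pi]
  have hsin_tail : Real.sin ((n' : ℝ) * theta n') = 0 := by
    rw [nat_theta hn, Real.sin_two_pi]
  have hcosl_tail : Real.cos ((l:ℝ) * (n' : ℝ) * theta n') = 1 := by
    rw [mul_assoc, nat_theta hn, Real.cos_nat_mul_two_pi]
  have hsinl_tail : Real.sin ((l:ℝ) * (n' : ℝ) * theta n') = 0 := by
    rw [mul_assoc, nat_theta hn]
    have := Real.sin_add_nat_mul_two_pi 0 l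
    simpa using this
  have hexp_tail : Complex.exp (-Complex.I * l * n' * (theta n' : ℂ)) = 1 := by
    rw [hexp n', hcosl_tail, hsinl_tail]; simp
  -- trig square fact in ℂ
  have hsC : ∀ k : ℕ, ((Real.sin ((k:ℝ) * theta n') : ℝ) : ℂ) ^ 2
      = 1 - ((Real.cos ((k:ℝ) * theta n') : ℝ) : ℂ) ^ 2 := by
    intro k
    have := Real.sin_sq ((k:ℝ) * theta n')
    exact_mod_cast congrArg (fun x : ℝ => (x : ℂ)) this
  -- cancellation sums
  have hz1 : ∑ k ∈ Finset.Icc 1 N,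
      Real.sin ((l:ℝ) * k * theta n') * (3 - Real.cos ((k:ℝ) * theta n')) / (2 * dk n' k ^ 3)
      = 0 := by
    apply sum_antisym (n := n')
    intro k hk
    simp only [Finset.mem_Icc] at hk
    rw [dk_sym hn (by omega), cos_sym hn (by omega), sinl_sym hn (by omega)]
    ring
  have hz2 : ∑ k ∈ Finset.Icc 1 N,
      -(Real.sin ((k:ℝ) * theta n') * (3 + Real.cos ((l:ℝ) * k * theta n'))) / (2 * dk n' k ^ 3)
      = 0 := by
    apply sum_antisym (n := n')
    intro k hk
    simp only [Finset.mem_Icc] at hk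
    rw [dk_sym hn (by omega), sin_sym hn (by omega), cosl_sym hn (by omega)]
    ring
  have hz3 : ∑ k ∈ Finset.Icc 1 N,
      Real.sin ((k:ℝ) * theta n') * (Real.cos ((l:ℝ) * k * theta n') - 3) / (2 * dk n' k ^ 3)
      = 0 := by
    apply sum_antisym (n := n')
    intro k hk
    simp only [Finset.mem_Icc] at hk
    rw [dk_sym hn (by omega), sin_sym hn (by omega), cosl_sym hn (by omega)]
    ring
  have hz4 : ∑ k ∈ Finset.Icc 1 N,
      Real.sin ((l:ℝ) * k * theta n') * (3 + Real.cos ((k:ℝ) * theta n')) / (2 * dk n' k ^ 3)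
      = 0 := by
    apply sum_antisym (n := n')
    intro k hk
    simp only [Finset.mem_Icc] at hk
    rw [dk_sym hn (by omega), cos_sym hn (by omega), sinl_sym hn (by omega)]
    ring
  constructor
  · funext i
    rw [Finset.sum_apply]
    fin_cases i
    · -- claim 1, component 0
      simp only [Pi.smul_apply, smul_eq_mul, Matrix.mulVec, dotProduct,
        Fin.sum_univ_two, Matrix.map_apply, Matrix.cons_val_zero, Matrix.cons_val_one,
        Matrix.head_cons, Fin.isValue, Fin.mk_zero, Fin.mk_one]
      rw [Finset.sum_Icc_succ_top (by omega)]
      rw [hexp_tail, hcos_tail, hsin_tail]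
      rw [Vn_entry hn m 0 0, Vn_entry hn m 0 1]
      rw [qn_zero hn, qn_one hn]
      have hterm : ∀ k ∈ Finset.Icc 1 N,
          Complex.exp (-Complex.I * l * k * (theta n' : ℂ)) *
            (((Vmat n' m k 0 0 : ℝ) : ℂ) * ((Real.cos ((k:ℝ) * theta n') : ℝ) : ℂ)
              + ((Vmat n' m k 0 1 : ℝ) : ℂ) * ((Real.sin ((k:ℝ) * theta n') : ℝ) : ℂ))
          = (((1 - Real.cos ((k:ℝ) * theta n') * Real.cos ((l:ℝ) * k * theta n')
                - 3 * (Real.cos ((k:ℝ) * theta n') - Real.cos ((l:ℝ) * k * theta n')))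
              / (2 * dk n' k ^ 3) : ℝ) : ℂ)
            + (-Complex.I) * ((Real.sin ((l:ℝ) * k * theta n')
                * (3 - Real.cos ((k:ℝ) * theta n')) / (2 * dk n' k ^ 3) : ℝ) : ℂ)
            + ((Vmat n' m k 0 0 : ℝ) : ℂ) := by
        intro k hk
        simp only [Finset.mem_Icc] at hk
        rw [V00 m hn (by omega) (hdk k hk.1 hk.2), V01 m hn (by omega) (hdk k hk.1 hk.2),
          hexp k]
        push_cast [-Complex.ofReal_cos, -Complex.ofReal_sin]
        linear_combination ((((Real.cos ((l:ℝ) * k * theta n') : ℝ) : ℂ)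
          - ((Real.sin ((l:ℝ) * k * theta n') : ℝ) : ℂ) * Complex.I) * 3
          / (2 * ((dk n' k : ℝ) : ℂ) ^ 3)) * hsC k
      rw [Finset.sum_congr rfl hterm]
      rw [Finset.sum_add_distrib, Finset.sum_add_distrib]
      have hmid : ∑ k ∈ Finset.Icc 1 N, (-Complex.I) *
          ((Real.sin ((l:ℝ) * k * theta n') * (3 - Real.cos ((k:ℝ) * theta n'))
            / (2 * dk n' k ^ 3) : ℝ) : ℂ) = 0 := by
        rw [← Finset.mul_sum, ← Complex.ofReal_sum, hz1]
        simp
      rw [hmid, add_zero]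
      rw [show Ul1 n' l = ∑ k ∈ Finset.Icc 1 N,
        (((1 - Real.cos ((k:ℝ) * theta n') * Real.cos ((l:ℝ) * k * theta n')
            - 3 * (Real.cos ((k:ℝ) * theta n') - Real.cos ((l:ℝ) * k * theta n')))
          / (2 * dk n' k ^ 3) : ℝ) : ℂ) from rfl]
      simp only [Nat.add_sub_cancel]
      rw [show n' - 1 = N by omega]
      norm_num [Complex.ofReal_sub, Complex.ofReal_neg, Complex.ofReal_sum,
        Complex.ofReal_mul, Complex.ofReal_one, Complex.ofReal_ofNat]
      try ring
    · -- claim 1, component 1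
      simp only [Pi.smul_apply, smul_eq_mul, Matrix.mulVec, dotProduct,
        Fin.sum_univ_two, Matrix.map_apply, Matrix.cons_val_zero, Matrix.cons_val_one,
        Matrix.head_cons, Fin.isValue, Fin.mk_zero, Fin.mk_one]
      rw [Finset.sum_Icc_succ_top (by omega)]
      rw [hexp_tail, hcos_tail, hsin_tail]
      rw [Vn_entry hn m 1 0, Vn_entry hn m 1 1]
      rw [qn_zero hn, qn_one hn]
      have hterm : ∀ k ∈ Finset.Icc 1 N,
          Complex.exp (-Complex.I * l * k * (theta n' : ℂ)) *
            (((Vmat n' m k 1 0 : ℝ) : ℂ) * ((Real.cos ((k:ℝ) * theta n') : ℝ) : ℂ)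
              + ((Vmat n' m k 1 1 : ℝ) : ℂ) * ((Real.sin ((k:ℝ) * theta n') : ℝ) : ℂ))
          = Complex.I * ((Real.sin ((k:ℝ) * theta n') * Real.sin ((l:ℝ) * k * theta n')
              / (2 * dk n' k ^ 3) : ℝ) : ℂ)
            + ((-(Real.sin ((k:ℝ) * theta n') * (3 + Real.cos ((l:ℝ) * k * theta n')))
                / (2 * dk n' k ^ 3) : ℝ) : ℂ)
            + ((Vmat n' m k 1 0 : ℝ) : ℂ) := by
        intro k hk
        simp only [Finset.mem_Icc] at hk
        rw [V10 m hn (by omega) (hdk k hk.1 hk.2), V11 m hn (by omega) (hdk k hk.1 hk.2),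
          hexp k]
        push_cast [-Complex.ofReal_cos, -Complex.ofReal_sin]
        ring
      rw [Finset.sum_congr rfl hterm]
      rw [Finset.sum_add_distrib, Finset.sum_add_distrib]
      have hmid : ∑ k ∈ Finset.Icc 1 N,
          ((-(Real.sin ((k:ℝ) * theta n') * (3 + Real.cos ((l:ℝ) * k * theta n')))
            / (2 * dk n' k ^ 3) : ℝ) : ℂ) = 0 := by
        rw [← Complex.ofReal_sum, hz2]
        simp
      rw [hmid, add_zero]
      rw [show Ul2 n' l = ∑ k ∈ Finset.Icc 1 N,
        Complex.I * ((Real.sin ((k:ℝ) * theta n') * Real.sin ((l:ℝ) * k * theta n')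
          / (2 * dk n' k ^ 3) : ℝ) : ℂ) from rfl]
      simp only [Nat.add_sub_cancel]
      rw [show n' - 1 = N by omega]
      norm_num [Complex.ofReal_sub, Complex.ofReal_neg, Complex.ofReal_sum,
        Complex.ofReal_mul, Complex.ofReal_one, Complex.ofReal_ofNat]
      try ring
  · funext i
    rw [Finset.sum_apply]
    fin_cases i
    · -- claim 2, component 0
      simp only [Pi.smul_apply, smul_eq_mul, Matrix.mulVec, dotProduct,
        Fin.sum_univ_two, Matrix.map_apply, Matrix.cons_val_zero, Matrix.cons_val_one,
        Matrix.head_cons, Fin.isValue, Fin.mk_zero, Fin.mk_one]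
      rw [Finset.sum_Icc_succ_top (by omega)]
      rw [hexp_tail, hcos_tail, hsin_tail]
      rw [Vn_entry hn m 0 0, Vn_entry hn m 0 1]
      rw [qn_zero hn, qn_one hn]
      have hterm : ∀ k ∈ Finset.Icc 1 N,
          Complex.exp (-Complex.I * l * k * (theta n' : ℂ)) *
            (((Vmat n' m k 0 0 : ℝ) : ℂ) * ((-Real.sin ((k:ℝ) * theta n') : ℝ) : ℂ)
              + ((Vmat n' m k 0 1 : ℝ) : ℂ) * ((Real.cos ((k:ℝ) * theta n') : ℝ) : ℂ))
          = (-Complex.I) * ((Real.sin ((k:ℝ) * theta n') * Real.sin ((l:ℝ) * k * theta n')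
              / (2 * dk n' k ^ 3) : ℝ) : ℂ)
            + ((Real.sin ((k:ℝ) * theta n') * (Real.cos ((l:ℝ) * k * theta n') - 3)
                / (2 * dk n' k ^ 3) : ℝ) : ℂ)
            + ((Vmat n' m k 0 1 : ℝ) : ℂ) := by
        intro k hk
        simp only [Finset.mem_Icc] at hk
        rw [V00 m hn (by omega) (hdk k hk.1 hk.2), V01 m hn (by omega) (hdk k hk.1 hk.2),
          hexp k]
        push_cast [-Complex.ofReal_cos, -Complex.ofReal_sin]
        ring
      rw [Finset.sum_congr rfl hterm]
      rw [Finset.sum_add_distrib, Finset.sum_add_distrib]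
      have hmid : ∑ k ∈ Finset.Icc 1 N,
          ((Real.sin ((k:ℝ) * theta n') * (Real.cos ((l:ℝ) * k * theta n') - 3)
            / (2 * dk n' k ^ 3) : ℝ) : ℂ) = 0 := by
        rw [← Complex.ofReal_sum, hz3]
        simp
      rw [hmid, add_zero]
      rw [show Ul1' n' l = ∑ k ∈ Finset.Icc 1 N,
        (-Complex.I) * ((Real.sin ((k:ℝ) * theta n') * Real.sin ((l:ℝ) * k * theta n')
          / (2 * dk n' k ^ 3) : ℝ) : ℂ) from rfl]
      simp only [Nat.add_sub_cancel]
      rw [show n' - 1 = N by omega]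
      norm_num [Complex.ofReal_sub, Complex.ofReal_neg, Complex.ofReal_sum,
        Complex.ofReal_mul, Complex.ofReal_one, Complex.ofReal_ofNat]
      try ring
    · -- claim 2, component 1
      simp only [Pi.smul_apply, smul_eq_mul, Matrix.mulVec, dotProduct,
        Fin.sum_univ_two, Matrix.map_apply, Matrix.cons_val_zero, Matrix.cons_val_one,
        Matrix.head_cons, Fin.isValue, Fin.mk_zero, Fin.mk_one]
      rw [Finset.sum_Icc_succ_top (by omega)]
      rw [hexp_tail, hcos_tail, hsin_tail]
      rw [Vn_entry hn m 1 0, Vn_entry hn m 1 1]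
      rw [qn_zero hn, qn_one hn]
      have hterm : ∀ k ∈ Finset.Icc 1 N,
          Complex.exp (-Complex.I * l * k * (theta n' : ℂ)) *
            (((Vmat n' m k 1 0 : ℝ) : ℂ) * ((-Real.sin ((k:ℝ) * theta n') : ℝ) : ℂ)
              + ((Vmat n' m k 1 1 : ℝ) : ℂ) * ((Real.cos ((k:ℝ) * theta n') : ℝ) : ℂ))
          = (((1 - Real.cos ((k:ℝ) * theta n') * Real.cos ((l:ℝ) * k * theta n')
                + 3 * (Real.cos ((k:ℝ) * theta n') - Real.cos ((l:ℝ) * k * theta n')))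
              / (2 * dk n' k ^ 3) : ℝ) : ℂ)
            + Complex.I * ((Real.sin ((l:ℝ) * k * theta n')
                * (3 + Real.cos ((k:ℝ) * theta n')) / (2 * dk n' k ^ 3) : ℝ) : ℂ)
            + ((Vmat n' m k 1 1 : ℝ) : ℂ) := by
        intro k hk
        simp only [Finset.mem_Icc] at hk
        rw [V10 m hn (by omega) (hdk k hk.1 hk.2), V11 m hn (by omega) (hdk k hk.1 hk.2),
          hexp k]
        push_cast [-Complex.ofReal_cos, -Complex.ofReal_sin]
        linear_combination (-(((Real.cos ((l:ℝ) * k * theta n') : ℝ) : ℂ)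
          - ((Real.sin ((l:ℝ) * k * theta n') : ℝ) : ℂ) * Complex.I) * 3
          / (2 * ((dk n' k : ℝ) : ℂ) ^ 3)) * hsC k
      rw [Finset.sum_congr rfl hterm]
      rw [Finset.sum_add_distrib, Finset.sum_add_distrib]
      have hmid : ∑ k ∈ Finset.Icc 1 N, Complex.I *
          ((Real.sin ((l:ℝ) * k * theta n') * (3 + Real.cos ((k:ℝ) * theta n'))
            / (2 * dk n' k ^ 3) : ℝ) : ℂ) = 0 := by
        rw [← Finset.mul_sum, ← Complex.ofReal_sum, hz4]
        simp
      rw [hmid, add_zero]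
      rw [show Ul2' n' l = ∑ k ∈ Finset.Icc 1 N,
        (((1 - Real.cos ((k:ℝ) * theta n') * Real.cos ((l:ℝ) * k * theta n')
            + 3 * (Real.cos ((k:ℝ) * theta n') - Real.cos ((l:ℝ) * k * theta n')))
          / (2 * dk n' k ^ 3) : ℝ) : ℂ) from rfl]
      simp only [Nat.add_sub_cancel]
      rw [show n' - 1 = N by omega]
      norm_num [Complex.ofReal_sub, Complex.ofReal_neg, Complex.ofReal_sum,
        Complex.ofReal_mul, Complex.ofReal_one, Complex.ofReal_ofNat]
      try ring

end
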